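/- For all x, y ∈ 𝔻 and λ ∈ ℝ, (1/(2π)) ∫₀^{2π} e_{λ,exp(iθ)}(x) · e_{−λ,exp(iθ)}(y) dθ = Φ_λ(φ_y(x)). -/

import Mathlib

open MeasureTheory

/-- The open unit disc in the complex plane. -/
def Disc : Set ℂ := {z : ℂ | ‖z‖ < 1}

/-- The geodesic symmetry `φ_a(z) = (a - z)/(1 - conj(a)·z)`. -/
noncomputable def phi (a z : ℂ) : ℂ := (a - z) / (1 - (starRingEnd ℂ) a * z)

/-- The plane wave `e_{λ,b}(z) = ((1 - |z|²)/|z - b|²)^{(1+iλ)/2}`. -/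
noncomputable def pw (lam : ℝ) (b z : ℂ) : ℂ :=
  (((1 - ‖z‖ ^ 2) / ‖z - b‖ ^ 2 : ℝ) : ℂ) ^
    ((1 + Complex.I * (lam : ℂ)) / 2)

/-- The spherical function `Φ_λ(z) = (1/(2π)) ∫₀^{2π} e_{λ,e^{iθ}}(z) dθ`. -/
noncomputable def sphFn (lam : ℝ) (z : ℂ) : ℂ :=
  (1 / (2 * Real.pi) : ℝ) •
    ∫ θ in (0:ℝ)..(2 * Real.pi), pw lam (Complex.exp (Complex.I * (θ : ℂ))) z

/-! The Möbius map `φ_y` preserves the circle and rescales the Poisson kernel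
`P(z, b) = (1 - |z|²)/|z - b|²` by `P(φ_y z, φ_y b) = P(z, b) / P(y, b)`, so
`e_{λ,b}(x) · e_{-λ,b}(y) = P(y, b) · e_{λ,φ_y b}(φ_y x)`. On the circle, `θ ↦ φ_y(e^{iθ})` has angular derivative
`P(y, e^{iθ}) > 0`: integrating this ODE gives an increasing lift `H` with
`φ_y(e^{iθ}) = e^{iH(θ)}`, and `H(2π) - H(0) = 2π` because the Poisson kernel has mean one.
The substitution `u = H(θ)` then turns the average of `P(y, b) · g(φ_y b)` into that of `g`. -/

open Complex ComplexConjugate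
open scoped Real

lemma one_sub_conj_mul_ne_zero {a z : ℂ} (ha : ‖a‖ < 1) (hz : ‖z‖ ≤ 1) :
    1 - conj a * z ≠ 0 := by
  refine sub_ne_zero.mpr fun h => ?_
  have : ‖conj a * z‖ < 1 := by
    rw [norm_mul, Complex.norm_conj]
    nlinarith [norm_nonneg a, norm_nonneg z]
  rw [← h, norm_one] at this
  exact lt_irrefl _ this

lemma norm_one_sub_conj_mul_sq_sub_norm_sub_sq (a z : ℂ) :
    ‖1 - conj a * z‖ ^ 2 - ‖a - z‖ ^ 2 = (1 - ‖a‖ ^ 2) * (1 - ‖z‖ ^ 2) := by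
  apply ofReal_injective
  push_cast [← Complex.mul_conj']
  simp only [map_sub, map_mul, map_one, conj_conj]
  ring

lemma norm_one_sub_conj_mul_of_norm_eq_one (a : ℂ) {b : ℂ} (hb : ‖b‖ = 1) :
    ‖1 - conj a * b‖ = ‖a - b‖ := by
  have h := norm_one_sub_conj_mul_sq_sub_norm_sub_sq a b
  rw [hb, one_pow, sub_self, mul_zero, sub_eq_zero] at h
  exact (pow_left_inj₀ (norm_nonneg _) (norm_nonneg _) two_ne_zero).mp h

lemma one_sub_norm_phi_sq {a z : ℂ} (h : 1 - conj a * z ≠ 0) :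
    1 - ‖phi a z‖ ^ 2 = (1 - ‖a‖ ^ 2) * (1 - ‖z‖ ^ 2) / ‖1 - conj a * z‖ ^ 2 := by
  have h' : ‖1 - conj a * z‖ ^ 2 ≠ 0 := by positivity
  rw [phi, norm_div, div_pow, eq_div_iff h', sub_mul, div_mul_cancel₀ _ h',
    ← norm_one_sub_conj_mul_sq_sub_norm_sub_sq, one_mul]

lemma norm_phi_of_norm_eq_one {a b : ℂ} (ha : ‖a‖ < 1) (hb : ‖b‖ = 1) : ‖phi a b‖ = 1 := by
  have h := one_sub_norm_phi_sq (one_sub_conj_mul_ne_zero ha hb.le)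
  rw [hb, one_pow, sub_self, mul_zero, zero_div, sub_eq_zero, eq_comm] at h
  exact (pow_eq_one_iff_of_nonneg (norm_nonneg _) two_ne_zero).mp h

lemma phi_sub_phi {a z b : ℂ} (hz : 1 - conj a * z ≠ 0) (hb : 1 - conj a * b ≠ 0) :
    phi a z - phi a b =
      (b - z) * (1 - a * conj a) / ((1 - conj a * z) * (1 - conj a * b)) := by
  rw [phi, phi, div_sub_div _ _ hz hb]
  ring_nf

lemma poissonKernel_zero_of_norm_eq_one (w : ℂ) {b : ℂ} (hb : ‖b‖ = 1) :
    poissonKernel 0 w b = (1 - ‖w‖ ^ 2) / ‖w - b‖ ^ 2 := by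
  simp [poissonKernel, hb, norm_sub_rev]

lemma poissonKernel_zero_pos {w b : ℂ} (hw : ‖w‖ < 1) (hb : ‖b‖ = 1) :
    0 < poissonKernel 0 w b := by
  have hwb : w - b ≠ 0 := sub_ne_zero.mpr fun h => by rw [h, hb] at hw; exact lt_irrefl _ hw
  have : 0 < 1 - ‖w‖ ^ 2 := by nlinarith [norm_nonneg w]
  rw [poissonKernel_zero_of_norm_eq_one w hb]
  positivity

lemma poissonKernel_phi {a z b : ℂ} (ha : ‖a‖ < 1) (hz : ‖z‖ < 1) (hb : ‖b‖ = 1) :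
    poissonKernel 0 (phi a z) (phi a b) = poissonKernel 0 z b / poissonKernel 0 a b := by
  have hu := one_sub_conj_mul_ne_zero ha hz.le
  have hv := one_sub_conj_mul_ne_zero ha hb.le
  have hzb : z - b ≠ 0 := sub_ne_zero.mpr fun h => by rw [h, hb] at hz; exact lt_irrefl _ hz
  have hab : a - b ≠ 0 := sub_ne_zero.mpr fun h => by rw [h, hb] at ha; exact lt_irrefl _ ha
  have hnorm : ‖1 - a * conj a‖ = 1 - ‖a‖ ^ 2 := by
    rw [Complex.mul_conj', ← ofReal_pow, ← ofReal_one, ← ofReal_sub, norm_real,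
      Real.norm_of_nonneg (by nlinarith [norm_nonneg a])]
  rw [poissonKernel_zero_of_norm_eq_one _ (norm_phi_of_norm_eq_one ha hb),
    poissonKernel_zero_of_norm_eq_one _ hb, poissonKernel_zero_of_norm_eq_one _ hb,
    one_sub_norm_phi_sq hu, phi_sub_phi hu hv, norm_div, norm_mul, norm_mul, hnorm,
    norm_one_sub_conj_mul_of_norm_eq_one a hb, norm_sub_rev b z]
  have := norm_ne_zero_iff.mpr hu
  have := norm_ne_zero_iff.mpr hzb
  have := norm_ne_zero_iff.mpr hab
  field_simp

lemma poissonKernel_zero_mul_of_norm_eq_one (a : ℂ) {b : ℂ} (hb : ‖b‖ = 1) :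
    (poissonKernel 0 a b : ℂ) * ((b - a) * (1 - conj a * b)) = (1 - a * conj a) * b := by
  rcases eq_or_ne a b with rfl | hab
  · simp [poissonKernel, Complex.mul_conj', hb]
  have hbb : b * conj b = 1 := by rw [Complex.mul_conj', hb]; simp
  have hd : (a - b) * (conj a - conj b) ≠ 0 := by
    rw [← map_sub, Complex.mul_conj']; simpa using sub_ne_zero.mpr hab
  rw [poissonKernel_zero_of_norm_eq_one a hb]
  push_cast
  rw [← Complex.mul_conj', ← Complex.mul_conj', map_sub, div_mul_eq_mul_div, div_eq_iff hd]
  linear_combination -(1 - a * conj a) * (b - a) * hbb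

lemma circleAverage_poissonKernel_zero_one {a : ℂ} (ha : ‖a‖ < 1) :
    Real.circleAverage (poissonKernel 0 a) 0 1 = 1 := by
  have h := (diffContOnCl_const (c := (1 : ℂ))).circleAverage_poissonKernel_smul
    (mem_ball_zero_iff.mpr ha)
  simp only [Real.circleAverage_def, Pi.smul_apply', real_smul, mul_one,
    intervalIntegral.integral_ofReal] at h
  exact_mod_cast h

lemma continuous_poissonKernel_circleMap {a : ℂ} (ha : ‖a‖ < 1) :
    Continuous fun θ => poissonKernel 0 a (circleMap 0 1 θ) := by
  have hne : ∀ θ, circleMap 0 1 θ - a ≠ 0 := fun θ => sub_ne_zero.mpr fun h => by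
    rw [← h, norm_circleMap_zero, abs_one] at ha; exact lt_irrefl _ ha
  simp only [poissonKernel, sub_zero]
  fun_prop (disch := exact fun θ => pow_ne_zero _ (norm_ne_zero_iff.mpr (hne θ)))

lemma hasDerivAt_phi_circleMap {a : ℂ} (ha : ‖a‖ < 1) (θ : ℝ) :
    HasDerivAt (fun t => phi a (circleMap 0 1 t))
      (I * poissonKernel 0 a (circleMap 0 1 θ) * phi a (circleMap 0 1 θ)) θ := by
  have hb : ‖circleMap 0 1 θ‖ = 1 := by simp
  have hv := one_sub_conj_mul_ne_zero ha hb.le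
  have hc := hasDerivAt_circleMap 0 1 θ
  refine ((hc.const_sub a).div ((hc.const_mul (conj a)).const_sub 1) hv).congr_deriv ?_
  have hP := poissonKernel_zero_mul_of_norm_eq_one a hb
  generalize circleMap 0 1 θ = b at *
  rw [phi, div_eq_iff (pow_ne_zero 2 hv)]
  field_simp
  linear_combination hP

lemma eq_mul_exp_integral_of_hasDerivAt {γ g : ℝ → ℂ} (hg : Continuous g)
    (hγ : ∀ t, HasDerivAt γ (g t * γ t) t) (t : ℝ) :
    γ t = γ 0 * exp (∫ s in 0..t, g s) := by
  have hG : ∀ t, HasDerivAt (fun t => ∫ s in 0..t, g s) (g t) t := fun t =>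
    (hg.integral_hasStrictDerivAt 0 t).hasDerivAt
  have hF : ∀ t, HasDerivAt (fun t => γ t * exp (-∫ s in 0..t, g s)) 0 t := fun t =>
    ((hγ t).mul (hG t).neg.cexp).congr_deriv (by ring)
  have hconst := is_const_of_deriv_eq_zero (fun s => (hF s).differentiableAt)
    (fun s => (hF s).deriv) t 0
  rw [intervalIntegral.integral_same, neg_zero, Complex.exp_zero, mul_one, exp_neg,
    ← div_eq_mul_inv, div_eq_iff (exp_ne_zero _)] at hconst
  exact hconst

lemma exists_lift_phi_circleMap {a : ℂ} (ha : ‖a‖ < 1) :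
    ∃ H : ℝ → ℝ, (∀ θ, HasDerivAt H (poissonKernel 0 a (circleMap 0 1 θ)) θ) ∧
      (∀ θ, circleMap 0 1 (H θ) = phi a (circleMap 0 1 θ)) ∧ H (2 * π) = H 0 + 2 * π := by
  have hP := continuous_poissonKernel_circleMap ha
  refine ⟨fun θ => arg (phi a 1) + ∫ s in 0..θ, poissonKernel 0 a (circleMap 0 1 s),
    fun θ => (hP.integral_hasStrictDerivAt 0 θ).hasDerivAt.const_add _, fun θ => ?_, ?_⟩
  · have hφ1 : exp (arg (phi a 1) * I) = phi a 1 := by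
      simpa [norm_phi_of_norm_eq_one ha norm_one] using norm_mul_exp_arg_mul_I (phi a 1)
    rw [eq_mul_exp_integral_of_hasDerivAt (by fun_prop) (hasDerivAt_phi_circleMap ha) θ,
      intervalIntegral.integral_const_mul, intervalIntegral.integral_ofReal,
      circleMap_zero 1 0, circleMap_zero, ofReal_add, add_mul, exp_add, hφ1]
    simp only [ofReal_zero, zero_mul, exp_zero, ofReal_one, one_mul, mul_comm I]
  · have h := circleAverage_poissonKernel_zero_one ha
    rw [Real.circleAverage_def, smul_eq_mul, inv_mul_eq_one₀ (by positivity)] at h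
    simp only [intervalIntegral.integral_same, add_zero, ← h]

theorem circleAverage_poissonKernel_smul_comp_phi {E : Type*} [NormedAddCommGroup E]
    [NormedSpace ℝ E] (g : ℂ → E) {a : ℂ} (ha : ‖a‖ < 1) :
    Real.circleAverage (fun b => poissonKernel 0 a b • g (phi a b)) 0 1 =
      Real.circleAverage g 0 1 := by
  obtain ⟨H, hH', hH, hH2π⟩ := exists_lift_phi_circleMap ha
  have hHc : Continuous H := continuous_iff_continuousAt.mpr fun θ => (hH' θ).continuousAt
  simp only [Real.circleAverage_def]
  congr 1
  calc ∫ θ in 0..2 * π, poissonKernel 0 a (circleMap 0 1 θ) • g (phi a (circleMap 0 1 θ))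
      = ∫ θ in 0..2 * π, poissonKernel 0 a (circleMap 0 1 θ) • ((g ∘ circleMap 0 1) ∘ H) θ := by
        simp only [Function.comp_apply, hH]
    _ = ∫ u in H 0..H (2 * π), g (circleMap 0 1 u) :=
        intervalIntegral.integral_deriv_smul_comp_of_deriv_nonneg hHc.continuousOn
          (fun θ _ => hH' θ) fun θ _ => (poissonKernel_zero_pos ha (by simp)).le
    _ = ∫ u in 0..2 * π, g (circleMap 0 1 u) := by
        rw [hH2π]
        simpa using ((periodic_circleMap 0 1).comp g).intervalIntegral_add_eq (H 0) 0

lemma circleAverage_zero_one_eq {E : Type*} [NormedAddCommGroup E] [NormedSpace ℝ E]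
    (f : ℂ → E) :
    Real.circleAverage f 0 1 = (1 / (2 * π) : ℝ) • ∫ θ in 0..2 * π, f (exp (I * θ)) := by
  simp only [Real.circleAverage_def, circleMap_zero, ofReal_one, one_mul, one_div, mul_comm I]

lemma ofReal_cpow_mul_ofReal_cpow_one_sub {p q : ℝ} (hp : 0 ≤ p) (hq : 0 < q) (s : ℂ) :
    (p : ℂ) ^ s * (q : ℂ) ^ (1 - s) = q • ((p / q : ℝ) : ℂ) ^ s := by
  have hq0 : (q : ℂ) ≠ 0 := ofReal_ne_zero.mpr hq.ne'
  rw [div_eq_mul_inv, ofReal_mul, mul_cpow_ofReal_nonneg hp (inv_nonneg.mpr hq.le), ofReal_inv,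
    inv_cpow _ _ (by simp [arg_ofReal_of_nonneg hq.le, Real.pi_ne_zero.symm]),
    cpow_sub _ _ hq0, cpow_one, real_smul]
  field_simp

lemma pw_eq_cpow_poissonKernel (lam : ℝ) {b : ℂ} (hb : ‖b‖ = 1) (z : ℂ) :
    pw lam b z = (poissonKernel 0 z b : ℂ) ^ ((1 + I * lam) / 2) := by
  rw [pw, poissonKernel_zero_of_norm_eq_one z hb]

lemma pw_mul_pw_neg {x a b : ℂ} (hx : ‖x‖ < 1) (ha : ‖a‖ < 1) (hb : ‖b‖ = 1) (lam : ℝ) :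
    pw lam b x * pw (-lam) b a = poissonKernel 0 a b • pw lam (phi a b) (phi a x) := by
  have hexp : (1 + I * ((-lam : ℝ) : ℂ)) / 2 = 1 - (1 + I * lam) / 2 := by push_cast; ring
  rw [pw_eq_cpow_poissonKernel _ hb, pw_eq_cpow_poissonKernel _ hb, hexp,
    pw_eq_cpow_poissonKernel _ (norm_phi_of_norm_eq_one ha hb), poissonKernel_phi ha hx hb,
    ofReal_cpow_mul_ofReal_cpow_one_sub (poissonKernel_zero_pos hx hb).le
      (poissonKernel_zero_pos ha hb)]

/-- The first identity of Lemma 8: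
`(1/(2π)) ∫₀^{2π} e_{λ,e^{iθ}}(x)·e_{-λ,e^{iθ}}(y) dθ = Φ_λ(φ_y(x))`. -/
theorem stmt8 (x : ℂ) (hx : x ∈ Disc) (y : ℂ) (hy : y ∈ Disc) (lam : ℝ) :
    (1 / (2 * Real.pi) : ℝ) •
        ∫ θ in (0:ℝ)..(2 * Real.pi),
          pw lam (Complex.exp (Complex.I * (θ : ℂ))) x *
            pw (-lam) (Complex.exp (Complex.I * (θ : ℂ))) y
      = sphFn lam (phi y x) := by
  have hx : ‖x‖ < 1 := hx
  have hy : ‖y‖ < 1 := hy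
  calc _ = Real.circleAverage (fun b => pw lam b x * pw (-lam) b y) 0 1 :=
        (circleAverage_zero_one_eq _).symm
    _ = Real.circleAverage (fun b => poissonKernel 0 y b • pw lam (phi y b) (phi y x)) 0 1 :=
        Real.circleAverage_congr_sphere fun b hb => pw_mul_pw_neg hx hy (by simpa using hb) lam
    _ = Real.circleAverage (fun b => pw lam b (phi y x)) 0 1 :=
        circleAverage_poissonKernel_smul_comp_phi (fun b => pw lam b (phi y x)) hy
    _ = sphFn lam (phi y x) := circleAverage_zero_one_eq _
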